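/- arXiv:2506.12829 — 3 statements merged into one kernel-verified Lean document; each statement's English description precedes it below -/
import Mathlib

section
/- Let X be a measurable space, let D_X^S and D_X^T be probability measures on X, let f_S, f_T : X → [0,1] be measurable labeling functions, and let H be a set of measurable functions X → [0,1] with f_S, f_T ∈ H. For h ∈ H define ε_S(h) = E_{x∼D_X^S}|h(x) − f_S(x)| and ε_T(h) = E_{x∼D_X^T}|h(x) − f_T(x)|. Define the H̃-divergence d_{H̃}(D_X^S, D_X^T) = 2·sup{ |D_X^S(A) − D_X^T(A)| : A = {x : |h(x) − h'(x)| > t}, h, h' ∈ H, t ∈ [0,1] }. Then for every h ∈ H: ε_T(h) ≤ ε_S(h) + d_{H̃}(D_X^S, D_X^T) + min{ E_{x∼D_X^S}|f_S(x) − f_T(x)|, E_{x∼D_X^T}|f_S(x) − f_T(x)| }. -/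
/-!
By the layer-cake formula, the mean of a `[0, 1]`-valued function `g` is `∫₀¹ μ{t < g} dt`, so
changing the measure from `P` to `Q` moves the mean of `|g - g'|` (for `g, g' ∈ H`) by at most the
supremum of `|P(A) - Q(A)|` over the sets `A = {t < |g - g'|}`, i.e. by half the `H̃`-divergence.
The bound follows from the triangle inequality `|h - fT| ≤ |h - fS| + |fS - fT|`, applied either
under `Q` and then transported to `P` with `g' = fS`, or transported first with `g' = fT` and then
applied under `P`; the two routes give the two terms of the minimum.
-/

open MeasureTheory Set

namespace MeasureTheory

variable {X : Type*} [MeasurableSpace X]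

section UnitInterval

variable {μ : Measure X} [IsFiniteMeasure μ] {g : X → ℝ}

lemma integrable_of_mem_Icc (hg : Measurable g) (hg01 : ∀ x, g x ∈ Icc (0 : ℝ) 1) :
    Integrable g μ :=
  .of_bound hg.aestronglyMeasurable 1 <| ae_of_all _ fun x => by
    rw [Real.norm_eq_abs, abs_of_nonneg (hg01 x).1]
    exact (hg01 x).2

lemma integral_eq_setIntegral_Ioc_measureReal_lt (hg : Measurable g)
    (hg01 : ∀ x, g x ∈ Icc (0 : ℝ) 1) :
    ∫ x, g x ∂μ = ∫ t in Ioc 0 1, μ.real {x | t < g x} := by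
  rw [(integrable_of_mem_Icc hg hg01).integral_eq_integral_meas_lt
    (ae_of_all _ fun x => (hg01 x).1)]
  refine setIntegral_eq_of_subset_of_forall_sdiff_eq_zero measurableSet_Ioi
    Ioc_subset_Ioi_self fun t ht => ?_
  have hempty : {x | t < g x} = ∅ :=
    eq_empty_of_forall_notMem fun x hx => ht.2 ⟨ht.1, (hx.trans_le (hg01 x).2).le⟩
  simp [hempty]

lemma antitone_measureReal_lt : Antitone fun t : ℝ => μ.real {x | t < g x} :=
  fun _ _ hst => measureReal_mono fun _ hx => hst.trans_lt hx

lemma integrableOn_Ioc_measureReal_lt :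
    IntegrableOn (fun t : ℝ => μ.real {x | t < g x}) (Ioc 0 1) :=
  (antitone_measureReal_lt.locallyIntegrable.integrableOn_isCompact isCompact_Icc).mono_set
    Ioc_subset_Icc_self

lemma integral_le_integral_add_of_measureReal_lt_sub_le (ν : Measure X) [IsFiniteMeasure ν]
    (hg : Measurable g) (hg01 : ∀ x, g x ∈ Icc (0 : ℝ) 1) {S : ℝ}
    (hS : ∀ t ∈ Ioc (0 : ℝ) 1, ν.real {x | t < g x} - μ.real {x | t < g x} ≤ S) :
    ∫ x, g x ∂ν ≤ ∫ x, g x ∂μ + S := by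
  have hmono : ∫ t in Ioc (0 : ℝ) 1, (ν.real {x | t < g x} - μ.real {x | t < g x})
      ≤ ∫ _ in Ioc (0 : ℝ) 1, S :=
    setIntegral_mono_on (integrableOn_Ioc_measureReal_lt.sub integrableOn_Ioc_measureReal_lt)
      (integrableOn_const (by simp)) measurableSet_Ioc hS
  rw [integral_sub integrableOn_Ioc_measureReal_lt integrableOn_Ioc_measureReal_lt] at hmono
  rw [integral_eq_setIntegral_Ioc_measureReal_lt hg hg01,
    integral_eq_setIntegral_Ioc_measureReal_lt hg hg01]
  simp only [integral_const, smul_eq_mul, measureReal_restrict_apply_univ, Real.volume_real_Ioc,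
    sub_zero, zero_le_one, max_eq_left, one_mul] at hmono
  linarith

end UnitInterval

lemma integral_abs_sub_le_add {μ : Measure X} {f g k : X → ℝ}
    (hfg : Integrable (fun x => f x - g x) μ) (hgk : Integrable (fun x => g x - k x) μ) :
    ∫ x, |f x - k x| ∂μ ≤ ∫ x, |f x - g x| ∂μ + ∫ x, |g x - k x| ∂μ := by
  rw [← integral_add hfg.abs hgk.abs]
  exact integral_mono_of_nonneg (ae_of_all _ fun _ => abs_nonneg _) (hfg.abs.add hgk.abs)
    (ae_of_all _ fun x => abs_sub_le (f x) (g x) (k x))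

variable {P Q : Measure X} {H : Set (X → ℝ)}

/-- The `H̃`-divergence of the paper is `2 * sSup (hTildeDiscrepancies P Q H)`. -/
def hTildeDiscrepancies (P Q : Measure X) (H : Set (X → ℝ)) : Set ℝ :=
  {r | ∃ g ∈ H, ∃ g' ∈ H, ∃ t ∈ Icc (0 : ℝ) 1,
    r = |P.real {x | t < |g x - g' x|} - Q.real {x | t < |g x - g' x|}|}

lemma sSup_hTildeDiscrepancies_nonneg : 0 ≤ sSup (hTildeDiscrepancies P Q H) :=
  Real.sSup_nonneg fun _ ⟨_, _, _, _, _, _, hr⟩ => hr ▸ abs_nonneg _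

lemma measureReal_sub_measureReal_le_sSup_hTildeDiscrepancies
    [IsProbabilityMeasure P] [IsProbabilityMeasure Q] {g g' : X → ℝ} (hg : g ∈ H) (hg' : g' ∈ H)
    {t : ℝ} (ht : t ∈ Icc (0 : ℝ) 1) :
    Q.real {x | t < |g x - g' x|} - P.real {x | t < |g x - g' x|}
      ≤ sSup (hTildeDiscrepancies P Q H) := by
  have hbdd : BddAbove (hTildeDiscrepancies P Q H) := ⟨1, fun _ ⟨_, _, _, _, _, _, hr⟩ => by
    simpa [hr] using abs_sub_le_of_le_of_le measureReal_nonneg measureReal_le_one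
      measureReal_nonneg measureReal_le_one⟩
  exact (le_abs_self _).trans <| (abs_sub_comm _ _).trans_le <|
    le_csSup hbdd ⟨g, hg, g', hg', t, ht, rfl⟩

lemma integral_abs_sub_le_integral_abs_sub_add_sSup_hTildeDiscrepancies
    [IsProbabilityMeasure P] [IsProbabilityMeasure Q]
    (hHmeas : ∀ g ∈ H, Measurable g) (hHrange : ∀ g ∈ H, ∀ x, g x ∈ Icc (0 : ℝ) 1)
    {g g' : X → ℝ} (hg : g ∈ H) (hg' : g' ∈ H) :
    ∫ x, |g x - g' x| ∂Q ≤ ∫ x, |g x - g' x| ∂P + sSup (hTildeDiscrepancies P Q H) := by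
  refine integral_le_integral_add_of_measureReal_lt_sub_le Q
    ((hHmeas g hg).sub (hHmeas g' hg')).abs (fun x => ⟨abs_nonneg _, ?_⟩)
    fun t ht => measureReal_sub_measureReal_le_sSup_hTildeDiscrepancies hg hg'
      (Ioc_subset_Icc_self ht)
  simpa using abs_sub_le_of_le_of_le (hHrange g hg x).1 (hHrange g hg x).2
    (hHrange g' hg' x).1 (hHrange g' hg' x).2

end MeasureTheory

/-- Existing cross-domain learning bound (Zhao et al.): for binary classification with
deterministic labeling functions `fS, fT` and absolute-error loss, the target error of any
hypothesis `h ∈ H` is bounded by its source error, plus the `H̃`-divergence between the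
covariate distributions, plus the smaller of the two concept-shift terms. -/
theorem existing_learning_bound {X : Type*} [MeasurableSpace X]
    (P Q : Measure X) [IsProbabilityMeasure P] [IsProbabilityMeasure Q]
    (H : Set (X → ℝ))
    (hHmeas : ∀ g ∈ H, Measurable g)
    (hHrange : ∀ g ∈ H, ∀ x, g x ∈ Set.Icc (0 : ℝ) 1)
    (fS fT : X → ℝ) (hfS : fS ∈ H) (hfT : fT ∈ H)
    (h : X → ℝ) (hh : h ∈ H) :
    ∫ x, |h x - fT x| ∂Q ≤
      (∫ x, |h x - fS x| ∂P)
      + 2 * sSup {r : ℝ | ∃ g ∈ H, ∃ g' ∈ H, ∃ t ∈ Set.Icc (0 : ℝ) 1,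
          r = |(P {x | t < |g x - g' x|}).toReal - (Q {x | t < |g x - g' x|}).toReal|}
      + min (∫ x, |fS x - fT x| ∂P) (∫ x, |fS x - fT x| ∂Q) := by
  change _ ≤ _ + 2 * sSup (hTildeDiscrepancies P Q H) + _
  have hS : 0 ≤ sSup (hTildeDiscrepancies P Q H) := sSup_hTildeDiscrepancies_nonneg
  have shift {g g' : X → ℝ} (hg : g ∈ H) (hg' : g' ∈ H) :
      ∫ x, |g x - g' x| ∂Q ≤ ∫ x, |g x - g' x| ∂P + sSup (hTildeDiscrepancies P Q H) :=
    integral_abs_sub_le_integral_abs_sub_add_sSup_hTildeDiscrepancies hHmeas hHrange hg hg'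
  have hint (μ : Measure X) [IsProbabilityMeasure μ] {g g' : X → ℝ} (hg : g ∈ H) (hg' : g' ∈ H) :
      Integrable (fun x => g x - g' x) μ :=
    (integrable_of_mem_Icc (hHmeas g hg) (hHrange g hg)).sub
      (integrable_of_mem_Icc (hHmeas g' hg') (hHrange g' hg'))
  have triangleP := integral_abs_sub_le_add (hint P hh hfS) (hint P hfS hfT)
  have triangleQ := integral_abs_sub_le_add (hint Q hh hfS) (hint Q hfS hfT)
  rcases min_cases (∫ x, |fS x - fT x| ∂P) (∫ x, |fS x - fT x| ∂Q) with ⟨hmin, -⟩ | ⟨hmin, -⟩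
  · linarith [shift hh hfT]
  · linarith [shift hh hfS]
end

section
/- Let P and Q be probability measures on metric spaces, let β > 0, and for a coupling γ of P and Q define F(γ) = ∫ ρ(x, x') dγ(x, x') + β·KL(γ ‖ P ⊗ Q). Then F is strongly convex at midpoints with respect to total variation: for any two couplings γ₀, γ₁ of P and Q with F(γ₀), F(γ₁) < ∞, F((γ₀ + γ₁)/2) ≤ (1/2)F(γ₀) + (1/2)F(γ₁) − (β/2)·d_TV(γ₀, γ₁)². -/
open MeasureTheory
open scoped ENNReal

noncomputable section

/-- A coupling of `P` and `Q`: a probability measure on the product whose marginals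
are `P` and `Q`. -/
def IsCoupling {X X' : Type*} [MeasurableSpace X] [MeasurableSpace X']
    (γ : Measure (X × X')) (P : Measure X) (Q : Measure X') : Prop :=
  IsProbabilityMeasure γ ∧ γ.map Prod.fst = P ∧ γ.map Prod.snd = Q

open Classical in
/-- Kullback–Leibler divergence (relative entropy) of `μ` with respect to `ν`. -/
def KLdiv {α : Type*} [MeasurableSpace α] (μ ν : Measure α) : ℝ≥0∞ :=
  if μ ≪ ν ∧ Integrable (llr μ ν) μ then ENNReal.ofReal (∫ x, llr μ ν x ∂μ) else ⊤

/-- Total-variation distance between two measures. -/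
def dTV {α : Type*} [MeasurableSpace α] (μ ν : Measure α) : ℝ :=
  sSup {r : ℝ | ∃ A : Set α, MeasurableSet A ∧ r = |(μ A).toReal - (ν A).toReal|}

/-- Entropic optimal transport objective `F(γ) = ∫ ρ dγ + β·KL(γ ‖ P ⊗ Q)`. -/
def entOTObj {X : Type*} [MeasurableSpace X] [PseudoMetricSpace X] (β : ℝ)
    (P Q : Measure X) (γ : Measure (X × X)) : ℝ≥0∞ :=
  (∫⁻ p, edist p.1 p.2 ∂γ) + ENNReal.ofReal β * KLdiv γ (P.prod Q)

/-! Write `p, q` for the densities of `γ₀, γ₁` with respect to `ν = P ⊗ Q`; the midpoint has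
density `(p + q)/2`, and `KL(μ ‖ ν) = ∫ klFun (dμ/dν) dν` with `klFun x = x log x + 1 - x`.
Pointwise, `klFun p + klFun q - 2 klFun ((p + q)/2) ≥ (p - q)² / (2(p + q))`: after the
substitution `p = s(1 + t)`, `q = s(1 - t)` this is
`(1 + t) log (1 + t) + (1 - t) log (1 - t) ≥ t²`, whose derivative inequality is
`log (1 + t) - log (1 - t) ≥ 2t`. Integrating, the convexity gap of `KL(· ‖ ν)` at the midpoint
is at least `½ ∫ (p - q)²/(p + q) dν`, which by Cauchy–Schwarz with weight `p + q` (of total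
mass 2) is at least `¼ (∫ |p - q| dν)² ≥ d_TV(γ₀, γ₁)²`. The transport cost is linear in `γ`. -/

open Real InformationTheory

theorem two_mul_le_log_one_add_sub_log_one_sub {t : ℝ} (h₀ : 0 ≤ t) (h₁ : t < 1) :
    2 * t ≤ log (1 + t) - log (1 - t) := by
  have hs := hasSum_log_sub_log_of_abs_lt_one (x := t) (by rwa [abs_of_nonneg h₀])
  simpa using le_hasSum hs 0 fun k _ => by positivity

theorem sq_le_mul_log_one_add_add_mul_log_one_sub {t : ℝ} (ht : t ∈ Set.Icc (-1 : ℝ) 1) :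
    t ^ 2 ≤ (1 + t) * log (1 + t) + (1 - t) * log (1 - t) := by
  wlog h₀ : 0 ≤ t generalizing t
  · have := this (t := -t) ⟨by linarith [ht.2], by linarith [ht.1]⟩ (by linarith)
    rw [neg_sq, ← sub_eq_add_neg, sub_neg_eq_add] at this
    linarith
  set G : ℝ → ℝ := fun t => (1 + t) * log (1 + t) + (1 - t) * log (1 - t) - t ^ 2
  have hG' : ∀ x ∈ Set.Ioo (0 : ℝ) 1,
      HasDerivAt G (log (1 + x) - log (1 - x) - 2 * x) x := by
    intro x hx
    have hadd : HasDerivAt (fun t : ℝ => 1 + t) 1 x := (hasDerivAt_id x).const_add 1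
    have hsub : HasDerivAt (fun t : ℝ => 1 - t) (-1) x := (hasDerivAt_id x).const_sub 1
    have h1 : (1 : ℝ) + x ≠ 0 := by linarith [hx.1]
    have h2 : (1 : ℝ) - x ≠ 0 := by linarith [hx.2]
    refine (((hadd.mul (hadd.log h1)).add (hsub.mul (hsub.log h2))).sub
      (hasDerivAt_pow 2 x)).congr_deriv ?_
    field_simp
    ring
  have hG_mono : MonotoneOn G (Set.Icc 0 1) := by
    refine monotoneOn_of_deriv_nonneg (convex_Icc 0 1) ?_ ?_ ?_
    · have : Continuous G := by
        simp only [G]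
        exact ((continuous_mul_log.comp (continuous_const.add continuous_id)).add
          (continuous_mul_log.comp (continuous_const.sub continuous_id))).sub (continuous_pow 2)
      exact this.continuousOn
    · rw [interior_Icc]
      exact fun x hx => (hG' x hx).differentiableAt.differentiableWithinAt
    · rw [interior_Icc]
      intro x hx
      rw [(hG' x hx).deriv]
      linarith [two_mul_le_log_one_add_sub_log_one_sub hx.1.le hx.2]
  have := hG_mono ⟨le_rfl, zero_le_one⟩ ⟨h₀, ht.2⟩ h₀
  simp only [G] at this
  norm_num at this
  linarith

theorem mul_mul_log_mul (a b : ℝ) : a * b * log (a * b) = b * (a * log a) + a * (b * log b) := by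
  have := negMulLog_mul a b
  simp only [negMulLog] at this
  linarith

theorem two_mul_klFun_midpoint_add_le {p q : ℝ} (hp : 0 ≤ p) (hq : 0 ≤ q) :
    2 * klFun ((p + q) / 2) + (p - q) ^ 2 / (p + q) / 2 ≤ klFun p + klFun q := by
  rcases (add_nonneg hp hq).eq_or_lt with hpq | hpq
  · obtain rfl : p = 0 := by linarith
    obtain rfl : q = 0 := by linarith
    simp only [add_zero, zero_div, sub_zero, div_zero]
    linarith
  obtain ⟨s, t, hs, ht, rfl, rfl⟩ :
      ∃ s t, 0 < s ∧ t ∈ Set.Icc (-1 : ℝ) 1 ∧ p = s * (1 + t) ∧ q = s * (1 - t) := by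
    refine ⟨(p + q) / 2, (p - q) / (p + q), by positivity, ⟨?_, ?_⟩, ?_, ?_⟩
    · rw [le_div_iff₀ hpq]; linarith
    · rw [div_le_iff₀ hpq]; linarith
    · field_simp; ring
    · field_simp; ring
  have hmid : (s * (1 + t) + s * (1 - t)) / 2 = s := by ring
  have hgap : (s * (1 + t) - s * (1 - t)) ^ 2 / (s * (1 + t) + s * (1 - t)) / 2 = s * t ^ 2 := by
    field_simp; ring
  simp only [klFun_apply, hmid, hgap, mul_mul_log_mul]
  nlinarith [sq_le_mul_log_one_add_add_mul_log_one_sub ht]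

section Measure

variable {α : Type*} [MeasurableSpace α]

theorem sq_integral_abs_le_integral_mul_integral_sq_div {μ : Measure α} {f w : α → ℝ}
    (hf : AEStronglyMeasurable f μ) (hw : Integrable w μ)
    (hfw : ∀ x, |f x| ≤ w x) :
    (∫ x, |f x| ∂μ) ^ 2 ≤ (∫ x, w x ∂μ) * ∫ x, f x ^ 2 / w x ∂μ := by
  have hf_int : Integrable (fun x => |f x|) μ :=
    hw.mono' hf.norm (ae_of_all _ fun x => by simpa using hfw x)
  have hfw_int : Integrable (fun x => f x ^ 2 / w x) μ := by
    refine hw.mono' ((hf.pow 2).div₀ hw.aestronglyMeasurable) (ae_of_all _ fun x => ?_)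
    rcases (abs_nonneg _).trans (hfw x) |>.eq_or_lt with h | h
    · simp [← h]
    · rw [Real.norm_of_nonneg (by positivity), div_le_iff₀ h, ← sq_abs]
      nlinarith [hfw x, abs_nonneg (f x)]
  -- `t ↦ ∫ (t w - |f|)² / w` is a nonnegative quadratic, so its discriminant is `≤ 0`.
  have hquad : ∀ t : ℝ, 0 ≤ (∫ x, w x ∂μ) * (t * t) + (-2 * ∫ x, |f x| ∂μ) * t
      + ∫ x, f x ^ 2 / w x ∂μ := by
    intro t
    rw [← integral_mul_const, ← integral_const_mul, ← integral_mul_const,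
      ← integral_add (hw.mul_const _) ((hf_int.const_mul _).mul_const _),
      ← integral_add (by exact (hw.mul_const _).add ((hf_int.const_mul _).mul_const _)) hfw_int]
    refine integral_nonneg fun x => ?_
    rcases (abs_nonneg _).trans (hfw x) |>.eq_or_lt with h | h
    · have : f x = 0 := abs_nonpos_iff.1 (h ▸ hfw x)
      simp [← h, this]
    · have : w x * (t * t) + -2 * |f x| * t + f x ^ 2 / w x = (w x * t - |f x|) ^ 2 / w x := by
        field_simp
        rw [← sq_abs (f x)]
        ring
      simp only [this]
      positivity
  have := discrim_le_zero hquad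
  rw [discrim] at this
  linarith

theorem ofReal_integral_le_lintegral_ofReal {μ : Measure α} {f : α → ℝ} (hf : 0 ≤ᵐ[μ] f) :
    ENNReal.ofReal (∫ x, f x ∂μ) ≤ ∫⁻ x, ENNReal.ofReal (f x) ∂μ := by
  by_cases hfm : AEStronglyMeasurable f μ
  · rw [integral_eq_lintegral_of_nonneg_ae hf hfm]
    exact ENNReal.ofReal_toReal_le
  · simp [integral_non_aestronglyMeasurable hfm]

variable {μ₀ μ₁ ν : Measure α}

theorem KLdiv_eq_klDiv {μ ν : Measure α} (h : μ Set.univ = ν Set.univ) :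
    KLdiv μ ν = klDiv μ ν := by
  rw [KLdiv, klDiv_def, measureReal_def, measureReal_def, h, add_sub_cancel_right]

theorem dTV_nonneg (μ ν : Measure α) [IsFiniteMeasure μ] [IsFiniteMeasure ν] : 0 ≤ dTV μ ν := by
  refine le_csSup ⟨μ.real Set.univ + ν.real Set.univ, ?_⟩ ⟨∅, .empty, by simp⟩
  rintro r ⟨A, -, rfl⟩
  rw [← measureReal_def, ← measureReal_def]
  have hμ : μ.real A ≤ μ.real Set.univ := measureReal_mono (Set.subset_univ A)
  have hν : ν.real A ≤ ν.real Set.univ := measureReal_mono (Set.subset_univ A)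
  rw [abs_le]
  constructor <;>
    linarith [measureReal_nonneg (μ := μ) (s := A), measureReal_nonneg (μ := ν) (s := A)]

theorem abs_sub_measureReal_le_setIntegral_abs_sub_rnDeriv [IsFiniteMeasure μ₀]
    [IsFiniteMeasure μ₁] [SigmaFinite ν] (h₀ : μ₀ ≪ ν) (h₁ : μ₁ ≪ ν) (A : Set α) :
    |μ₀.real A - μ₁.real A|
      ≤ ∫ x in A, |(μ₀.rnDeriv ν x).toReal - (μ₁.rnDeriv ν x).toReal| ∂ν := by
  rw [← Measure.setIntegral_toReal_rnDeriv h₀, ← Measure.setIntegral_toReal_rnDeriv h₁,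
    ← integral_sub Measure.integrable_toReal_rnDeriv.integrableOn
      Measure.integrable_toReal_rnDeriv.integrableOn]
  exact abs_integral_le_integral_abs

theorem dTV_le_half_integral_abs_sub_rnDeriv [IsFiniteMeasure μ₀] [IsFiniteMeasure μ₁]
    [SigmaFinite ν] (h₀ : μ₀ ≪ ν) (h₁ : μ₁ ≪ ν) (huniv : μ₀ Set.univ = μ₁ Set.univ) :
    dTV μ₀ μ₁ ≤ (∫ x, |(μ₀.rnDeriv ν x).toReal - (μ₁.rnDeriv ν x).toReal| ∂ν) / 2 := by
  refine csSup_le ⟨0, ∅, .empty, by simp⟩ ?_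
  rintro r ⟨A, hA, rfl⟩
  have hcompl : |μ₀.real Aᶜ - μ₁.real Aᶜ| = |μ₀.real A - μ₁.real A| := by
    rw [measureReal_compl hA, measureReal_compl hA, measureReal_def,
      measureReal_def (s := Set.univ), huniv, ← abs_neg]
    ring_nf
  have hint : Integrable (fun x => |(μ₀.rnDeriv ν x).toReal - (μ₁.rnDeriv ν x).toReal|) ν :=
    (Measure.integrable_toReal_rnDeriv.sub Measure.integrable_toReal_rnDeriv).abs
  rw [← integral_add_compl hA hint, ← measureReal_def, ← measureReal_def]
  linarith [abs_sub_measureReal_le_setIntegral_abs_sub_rnDeriv h₀ h₁ A,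
    abs_sub_measureReal_le_setIntegral_abs_sub_rnDeriv h₀ h₁ Aᶜ]
theorem isProbabilityMeasure_midpoint [IsProbabilityMeasure μ₀] [IsProbabilityMeasure μ₁] :
    IsProbabilityMeasure ((2 : ℝ≥0∞)⁻¹ • (μ₀ + μ₁)) where
  measure_univ := by
    simp only [Measure.smul_apply, Measure.add_apply, measure_univ, smul_eq_mul, one_add_one_eq_two]
    exact ENNReal.inv_mul_cancel two_ne_zero ENNReal.ofNat_ne_top

theorem toReal_rnDeriv_midpoint [IsFiniteMeasure μ₀] [IsFiniteMeasure μ₁] [SigmaFinite ν] :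
    (fun x => (((2 : ℝ≥0∞)⁻¹ • (μ₀ + μ₁)).rnDeriv ν x).toReal)
      =ᵐ[ν] fun x => ((μ₀.rnDeriv ν x).toReal + (μ₁.rnDeriv ν x).toReal) / 2 := by
  filter_upwards [Measure.rnDeriv_smul_left_of_ne_top (μ₀ + μ₁) ν (r := 2⁻¹) (by simp),
    Measure.rnDeriv_add μ₀ μ₁ ν, Measure.rnDeriv_lt_top μ₀ ν, Measure.rnDeriv_lt_top μ₁ ν]
    with x hsmul hadd h₀ h₁
  rw [hsmul, Pi.smul_apply, hadd, Pi.add_apply, smul_eq_mul, ENNReal.toReal_mul,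
    ENNReal.toReal_add h₀.ne h₁.ne, ENNReal.toReal_inv, ENNReal.toReal_ofNat]
  ring

theorem two_mul_klDiv_midpoint_add_le [IsFiniteMeasure μ₀] [IsFiniteMeasure μ₁]
    [IsFiniteMeasure ν] (h₀ : μ₀ ≪ ν) (h₁ : μ₁ ≪ ν) :
    2 * klDiv ((2 : ℝ≥0∞)⁻¹ • (μ₀ + μ₁)) ν
        + ∫⁻ x, ENNReal.ofReal (((μ₀.rnDeriv ν x).toReal - (μ₁.rnDeriv ν x).toReal) ^ 2
          / ((μ₀.rnDeriv ν x).toReal + (μ₁.rnDeriv ν x).toReal) / 2) ∂ν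
      ≤ klDiv μ₀ ν + klDiv μ₁ ν := by
  have := Measure.smul_finite (μ₀ + μ₁) (c := 2⁻¹) (by simp)
  have hm : (2 : ℝ≥0∞)⁻¹ • (μ₀ + μ₁) ≪ ν :=
    Measure.smul_absolutelyContinuous.trans (h₀.add_left h₁)
  rw [klDiv_eq_lintegral_klFun_of_ac hm, klDiv_eq_lintegral_klFun_of_ac h₀,
    klDiv_eq_lintegral_klFun_of_ac h₁, ← lintegral_const_mul _ (by fun_prop),
    ← lintegral_add_left (by fun_prop), ← lintegral_add_left (by fun_prop)]
  refine lintegral_mono_ae ?_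
  filter_upwards [toReal_rnDeriv_midpoint (μ₀ := μ₀) (μ₁ := μ₁) (ν := ν)] with x hx
  rw [hx]
  set p := (μ₀.rnDeriv ν x).toReal
  set q := (μ₁.rnDeriv ν x).toReal
  have hp : 0 ≤ p := ENNReal.toReal_nonneg
  have hq : 0 ≤ q := ENNReal.toReal_nonneg
  have hgap : 0 ≤ (p - q) ^ 2 / (p + q) / 2 := by positivity
  rw [← ENNReal.ofReal_ofNat 2, ← ENNReal.ofReal_mul zero_le_two,
    ← ENNReal.ofReal_add (mul_nonneg zero_le_two (klFun_nonneg (by positivity))) hgap,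
    ← ENNReal.ofReal_add (klFun_nonneg hp) (klFun_nonneg hq)]
  exact ENNReal.ofReal_le_ofReal (two_mul_klFun_midpoint_add_le hp hq)

theorem dTV_sq_le_integral_sq_sub_div_add_rnDeriv [IsProbabilityMeasure μ₀]
    [IsProbabilityMeasure μ₁] [SigmaFinite ν] (h₀ : μ₀ ≪ ν) (h₁ : μ₁ ≪ ν) :
    dTV μ₀ μ₁ ^ 2 ≤ ∫ x, ((μ₀.rnDeriv ν x).toReal - (μ₁.rnDeriv ν x).toReal) ^ 2
      / ((μ₀.rnDeriv ν x).toReal + (μ₁.rnDeriv ν x).toReal) / 2 ∂ν := by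
  set p := fun x => (μ₀.rnDeriv ν x).toReal
  set q := fun x => (μ₁.rnDeriv ν x).toReal
  have hp0 : ∀ x, 0 ≤ p x := fun _ => ENNReal.toReal_nonneg
  have hq0 : ∀ x, 0 ≤ q x := fun _ => ENNReal.toReal_nonneg
  have hp : Integrable p ν := Measure.integrable_toReal_rnDeriv
  have hq : Integrable q ν := Measure.integrable_toReal_rnDeriv
  have hpq : ∫ x, (p x + q x) ∂ν = 2 := by
    rw [integral_add hp hq, Measure.integral_toReal_rnDeriv h₀,
      Measure.integral_toReal_rnDeriv h₁]
    norm_num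
  have hCS := sq_integral_abs_le_integral_mul_integral_sq_div (f := fun x => p x - q x)
    (w := fun x => p x + q x) (hp.sub hq).aestronglyMeasurable (hp.add hq) fun x =>
      abs_sub_le_of_nonneg_of_le (hp0 x) (le_add_of_nonneg_right (hq0 x)) (hq0 x)
        (le_add_of_nonneg_left (hp0 x))
  have hTV := dTV_le_half_integral_abs_sub_rnDeriv h₀ h₁ (by simp)
  rw [integral_div]
  nlinarith [dTV_nonneg μ₀ μ₁]

theorem klDiv_midpoint_add_le [IsProbabilityMeasure μ₀] [IsProbabilityMeasure μ₁]
    [IsFiniteMeasure ν] :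
    klDiv ((2 : ℝ≥0∞)⁻¹ • (μ₀ + μ₁)) ν + ENNReal.ofReal (dTV μ₀ μ₁ ^ 2 / 2)
      ≤ 2⁻¹ * klDiv μ₀ ν + 2⁻¹ * klDiv μ₁ ν := by
  by_cases h₀ : μ₀ ≪ ν
  swap; · simp [h₀]
  by_cases h₁ : μ₁ ≪ ν
  swap; · simp [h₁]
  have hgap := (ENNReal.ofReal_le_ofReal (dTV_sq_le_integral_sq_sub_div_add_rnDeriv h₀ h₁)).trans
    (ofReal_integral_le_lintegral_ofReal (ae_of_all _ fun x => by positivity))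
  have hsum := (add_le_add le_rfl hgap).trans (two_mul_klDiv_midpoint_add_le h₀ h₁)
  calc klDiv ((2 : ℝ≥0∞)⁻¹ • (μ₀ + μ₁)) ν + ENNReal.ofReal (dTV μ₀ μ₁ ^ 2 / 2)
      = 2⁻¹ * (2 * klDiv ((2 : ℝ≥0∞)⁻¹ • (μ₀ + μ₁)) ν + ENNReal.ofReal (dTV μ₀ μ₁ ^ 2)) := by
        rw [mul_add, ← mul_assoc, ENNReal.inv_mul_cancel two_ne_zero ENNReal.ofNat_ne_top,
          one_mul, ENNReal.ofReal_div_of_pos two_pos, ENNReal.div_eq_inv_mul, ENNReal.ofReal_ofNat]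
    _ ≤ 2⁻¹ * (klDiv μ₀ ν + klDiv μ₁ ν) := by gcongr
    _ = 2⁻¹ * klDiv μ₀ ν + 2⁻¹ * klDiv μ₁ ν := mul_add _ _ _

end Measure

theorem entOT_strong_convexity_general {X : Type*} [MeasurableSpace X] [PseudoMetricSpace X]
    (β : ℝ)
    (P Q : Measure X) [IsProbabilityMeasure P] [IsProbabilityMeasure Q]
    (γ₀ γ₁ : Measure (X × X)) (h₀ : IsCoupling γ₀ P Q) (h₁ : IsCoupling γ₁ P Q) :
    entOTObj β P Q ((2 : ℝ≥0∞)⁻¹ • (γ₀ + γ₁))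
        + ENNReal.ofReal (β / 2 * dTV γ₀ γ₁ ^ 2)
      ≤ 2⁻¹ * entOTObj β P Q γ₀ + 2⁻¹ * entOTObj β P Q γ₁ := by
  have := h₀.1
  have := h₁.1
  have := isProbabilityMeasure_midpoint (μ₀ := γ₀) (μ₁ := γ₁)
  have hKL : ∀ (γ : Measure (X × X)) [IsProbabilityMeasure γ],
      KLdiv γ (P.prod Q) = klDiv γ (P.prod Q) := fun γ _ => KLdiv_eq_klDiv (by simp)
  set b := ENNReal.ofReal β
  calc entOTObj β P Q ((2 : ℝ≥0∞)⁻¹ • (γ₀ + γ₁)) + ENNReal.ofReal (β / 2 * dTV γ₀ γ₁ ^ 2)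
      = 2⁻¹ * ∫⁻ x, edist x.1 x.2 ∂γ₀ + 2⁻¹ * ∫⁻ x, edist x.1 x.2 ∂γ₁
          + b * (klDiv ((2 : ℝ≥0∞)⁻¹ • (γ₀ + γ₁)) (P.prod Q)
            + ENNReal.ofReal (dTV γ₀ γ₁ ^ 2 / 2)) := by
        rw [entOTObj, hKL, lintegral_smul_measure, lintegral_add_measure, smul_eq_mul,
          div_mul_eq_mul_div, mul_div_assoc, ENNReal.ofReal_mul' (by positivity)]
        ring
    _ ≤ 2⁻¹ * ∫⁻ x, edist x.1 x.2 ∂γ₀ + 2⁻¹ * ∫⁻ x, edist x.1 x.2 ∂γ₁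
          + b * (2⁻¹ * klDiv γ₀ (P.prod Q) + 2⁻¹ * klDiv γ₁ (P.prod Q)) := by
        gcongr _ + b * ?_
        exact klDiv_midpoint_add_le
    _ = 2⁻¹ * entOTObj β P Q γ₀ + 2⁻¹ * entOTObj β P Q γ₁ := by
        rw [entOTObj, entOTObj, hKL, hKL]
        ring

/-- The entropic optimal transport objective is strongly convex at midpoints with respect
to total variation: `F((γ₀+γ₁)/2) ≤ ½F(γ₀) + ½F(γ₁) − (β/2)·d_TV(γ₀,γ₁)²`. -/
theorem entOT_strong_convexity {X : Type*} [MeasurableSpace X] [PseudoMetricSpace X]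
    (β : ℝ) (hβ : 0 < β)
    (P Q : Measure X) [IsProbabilityMeasure P] [IsProbabilityMeasure Q]
    (γ₀ γ₁ : Measure (X × X)) (h₀ : IsCoupling γ₀ P Q) (h₁ : IsCoupling γ₁ P Q)
    (hF₀ : entOTObj β P Q γ₀ < ⊤) (hF₁ : entOTObj β P Q γ₁ < ⊤) :
    entOTObj β P Q ((2 : ℝ≥0∞)⁻¹ • (γ₀ + γ₁))
        + ENNReal.ofReal (β / 2 * dTV γ₀ γ₁ ^ 2)
      ≤ 2⁻¹ * entOTObj β P Q γ₀ + 2⁻¹ * entOTObj β P Q γ₁ :=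
  entOT_strong_convexity_general β P Q γ₀ γ₁ h₀ h₁

end
end

section
/- Let μ and ν be Borel probability measures on ℝ^d with finite second moments, with means m_μ and m_ν. Then W₁(μ, ν) ≤ ∫∫ ‖y − y'‖ dμ(y) dν(y') ≤ W₁(μ, ν) + (∫ ‖y − m_μ‖² dμ(y))^{1/2} + (∫ ‖y' − m_ν‖² dν(y'))^{1/2}; that is, the expected distance under the independent (product) coupling sandwiches W₁ up to the two standard deviations. -/
open MeasureTheory
open scoped ENNReal

noncomputable section

/-- Wasserstein-1 distance (as an extended nonnegative real):
infimum over couplings of the expected distance. -/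
def W1e {Y : Type*} [MeasurableSpace Y] [PseudoEMetricSpace Y] (μ ν : Measure Y) : ℝ≥0∞ :=
  ⨅ γ ∈ {γ : Measure (Y × Y) | IsCoupling γ μ ν}, ∫⁻ p, edist p.1 p.2 ∂γ

/-- Wasserstein-1 distance, as a real number. -/
def W1 {Y : Type*} [MeasurableSpace Y] [PseudoEMetricSpace Y] (μ ν : Measure Y) : ℝ :=
  (W1e μ ν).toReal

open ProbabilityTheory

/-!
The product coupling is one of the couplings in the infimum defining `W₁`, which gives the
lower bound. For the upper bound, insert the means:
`‖y - y'‖ ≤ ‖y - m_μ‖ + ‖m_μ - m_ν‖ + ‖y' - m_ν‖`. After integration the middle term is at most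
`W₁(μ, ν)`, since for any coupling `γ` Jensen's inequality gives
`‖m_μ - m_ν‖ = ‖∫ (y - y') dγ‖ ≤ ∫ ‖y - y'‖ dγ`, and each mean absolute deviation is at most the
corresponding standard deviation because variances are nonnegative.
-/

theorem integral_le_sqrt_integral_sq {α : Type*} [MeasurableSpace α] {μ : Measure α}
    [IsProbabilityMeasure μ] {f : α → ℝ} (hf : MemLp f 2 μ) :
    ∫ x, f x ∂μ ≤ √(∫ x, f x ^ 2 ∂μ) := by
  refine Real.le_sqrt_of_sq_le ?_
  have hvar := variance_nonneg f μ
  rw [variance_eq_sub hf] at hvar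
  simp only [Pi.pow_apply] at hvar
  linarith

section Coupling

variable {X X' : Type*} [MeasurableSpace X] [MeasurableSpace X']
  {γ : Measure (X × X')} {μ : Measure X} {ν : Measure X'}

theorem isCoupling_prod (μ : Measure X) (ν : Measure X') [IsProbabilityMeasure μ]
    [IsProbabilityMeasure ν] : IsCoupling (μ.prod ν) μ ν :=
  ⟨inferInstance, by simp, by simp⟩

variable {E : Type*} [NormedAddCommGroup E]

namespace IsCoupling

theorem integrable_comp_fst (h : IsCoupling γ μ ν) {f : X → E} (hf : Integrable f μ) :
    Integrable (fun p => f p.1) γ := by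
  rw [← h.2.1] at hf
  exact hf.comp_measurable measurable_fst

theorem integrable_comp_snd (h : IsCoupling γ μ ν) {f : X' → E} (hf : Integrable f ν) :
    Integrable (fun p => f p.2) γ := by
  rw [← h.2.2] at hf
  exact hf.comp_measurable measurable_snd

variable [NormedSpace ℝ E]

theorem integral_comp_fst (h : IsCoupling γ μ ν) {f : X → E} (hf : AEStronglyMeasurable f μ) :
    ∫ p, f p.1 ∂γ = ∫ x, f x ∂μ := by
  rw [← h.2.1] at hf ⊢
  exact (integral_map measurable_fst.aemeasurable hf).symm

theorem integral_comp_snd (h : IsCoupling γ μ ν) {f : X' → E} (hf : AEStronglyMeasurable f ν) :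
    ∫ p, f p.2 ∂γ = ∫ x, f x ∂ν := by
  rw [← h.2.2] at hf ⊢
  exact (integral_map measurable_snd.aemeasurable hf).symm

end IsCoupling

end Coupling

theorem W1e_le_lintegral_edist {Y : Type*} [MeasurableSpace Y] [PseudoEMetricSpace Y]
    {γ : Measure (Y × Y)} {μ ν : Measure Y} (h : IsCoupling γ μ ν) :
    W1e μ ν ≤ ∫⁻ p, edist p.1 p.2 ∂γ :=
  iInf₂_le γ h

section Normed

variable {E : Type*} [NormedAddCommGroup E] [MeasurableSpace E]
  {γ : Measure (E × E)} {μ ν : Measure E}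

theorem lintegral_edist_eq_ofReal_integral_norm_sub
    (h : Integrable (fun p : E × E => p.1 - p.2) γ) :
    ∫⁻ p, edist p.1 p.2 ∂γ = ENNReal.ofReal (∫ p, ‖p.1 - p.2‖ ∂γ) := by
  simp only [ofReal_integral_norm_eq_lintegral_enorm h, edist_eq_enorm_sub]

namespace IsCoupling

theorem integrable_fst_sub_snd (h : IsCoupling γ μ ν) (hμ : Integrable (fun y => y) μ)
    (hν : Integrable (fun y => y) ν) : Integrable (fun p : E × E => p.1 - p.2) γ :=
  (h.integrable_comp_fst hμ).sub (h.integrable_comp_snd hν)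

theorem integral_norm_sub_le (h : IsCoupling γ μ ν) (hμ : Integrable (fun y => y) μ)
    (hν : Integrable (fun y => y) ν) (a b : E) :
    ∫ p, ‖p.1 - p.2‖ ∂γ ≤ ∫ y, ‖y - a‖ ∂μ + ‖a - b‖ + ∫ y, ‖y - b‖ ∂ν := by
  have : IsProbabilityMeasure γ := h.1
  have hμa : Integrable (fun p : E × E => ‖p.1 - a‖) γ :=
    ((h.integrable_comp_fst hμ).sub (integrable_const a)).norm
  have hνb : Integrable (fun p : E × E => ‖p.2 - b‖) γ :=
    ((h.integrable_comp_snd hν).sub (integrable_const b)).norm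
  calc ∫ p, ‖p.1 - p.2‖ ∂γ ≤ ∫ p, (‖p.1 - a‖ + ‖a - b‖ + ‖p.2 - b‖) ∂γ := by
        refine integral_mono (h.integrable_fst_sub_snd hμ hν).norm
          ((hμa.add (integrable_const _)).add hνb) fun p => ?_
        calc ‖p.1 - p.2‖ = ‖(p.1 - a) + (a - b) - (p.2 - b)‖ := by congr 1; abel
          _ ≤ ‖p.1 - a‖ + ‖a - b‖ + ‖p.2 - b‖ := norm_sub_le_of_le (norm_add_le _ _) le_rfl
    _ = ∫ y, ‖y - a‖ ∂μ + ‖a - b‖ + ∫ y, ‖y - b‖ ∂ν := by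
        rw [integral_add (f := fun p => ‖p.1 - a‖ + ‖a - b‖) (hμa.add (integrable_const _)) hνb,
          integral_add hμa (integrable_const _),
          h.integral_comp_fst (f := fun y => ‖y - a‖) (hμ.1.sub aestronglyMeasurable_const).norm,
          h.integral_comp_snd (f := fun y => ‖y - b‖) (hν.1.sub aestronglyMeasurable_const).norm]
        simp

theorem ofReal_norm_integral_sub_le_lintegral_edist [NormedSpace ℝ E]
    (h : IsCoupling γ μ ν) (hμ : Integrable (fun y => y) μ) (hν : Integrable (fun y => y) ν) :
    ENNReal.ofReal ‖∫ y, y ∂μ - ∫ y, y ∂ν‖ ≤ ∫⁻ p, edist p.1 p.2 ∂γ := by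
  have hmean : ∫ p, (p.1 - p.2) ∂γ = ∫ y, y ∂μ - ∫ y, y ∂ν := by
    rw [integral_sub (h.integrable_comp_fst hμ) (h.integrable_comp_snd hν),
      h.integral_comp_fst hμ.1, h.integral_comp_snd hν.1]
  rw [lintegral_edist_eq_ofReal_integral_norm_sub (h.integrable_fst_sub_snd hμ hν), ← hmean]
  exact ENNReal.ofReal_le_ofReal (norm_integral_le_integral_norm _)

end IsCoupling

variable [IsProbabilityMeasure μ] [IsProbabilityMeasure ν]

theorem integral_norm_sub_prod (hμ : Integrable (fun y => y) μ)
    (hν : Integrable (fun y => y) ν) :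
    ∫ p, ‖p.1 - p.2‖ ∂(μ.prod ν) = ∫ y, ∫ y', ‖y - y'‖ ∂ν ∂μ :=
  integral_prod _ ((isCoupling_prod μ ν).integrable_fst_sub_snd hμ hν).norm

theorem W1e_le_ofReal_integral_integral_norm_sub (hμ : Integrable (fun y => y) μ)
    (hν : Integrable (fun y => y) ν) :
    W1e μ ν ≤ ENNReal.ofReal (∫ y, ∫ y', ‖y - y'‖ ∂ν ∂μ) := by
  have h := isCoupling_prod μ ν
  rw [← integral_norm_sub_prod hμ hν,
    ← lintegral_edist_eq_ofReal_integral_norm_sub (h.integrable_fst_sub_snd hμ hν)]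
  exact W1e_le_lintegral_edist h

theorem W1_le_integral_integral_norm_sub (hμ : Integrable (fun y => y) μ)
    (hν : Integrable (fun y => y) ν) :
    W1 μ ν ≤ ∫ y, ∫ y', ‖y - y'‖ ∂ν ∂μ :=
  ENNReal.toReal_le_of_le_ofReal
    (integral_nonneg fun _ => integral_nonneg fun _ => norm_nonneg _)
    (W1e_le_ofReal_integral_integral_norm_sub hμ hν)

theorem norm_integral_sub_integral_le_W1 [NormedSpace ℝ E] (hμ : Integrable (fun y => y) μ)
    (hν : Integrable (fun y => y) ν) :
    ‖∫ y, y ∂μ - ∫ y, y ∂ν‖ ≤ W1 μ ν := by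
  have hfin : W1e μ ν ≠ ∞ :=
    ne_top_of_le_ne_top ENNReal.ofReal_ne_top (W1e_le_ofReal_integral_integral_norm_sub hμ hν)
  refine (ENNReal.ofReal_le_iff_le_toReal hfin).1 (le_iInf₂ fun γ h => ?_)
  exact IsCoupling.ofReal_norm_integral_sub_le_lintegral_edist h hμ hν

end Normed

/-- For probability measures on `ℝ^d` with finite second moments, the expected distance
under the independent (product) coupling sandwiches `W₁` up to the two standard
deviations:
`W₁(μ,ν) ≤ ∫∫ ‖y − y'‖ dμ dν ≤ W₁(μ,ν) + sd(μ) + sd(ν)`. -/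
theorem independent_coupling_sandwich {d : ℕ}
    (μ ν : Measure (EuclideanSpace ℝ (Fin d)))
    [IsProbabilityMeasure μ] [IsProbabilityMeasure ν]
    (hμ : Integrable (fun y => ‖y‖ ^ 2) μ) (hν : Integrable (fun y => ‖y‖ ^ 2) ν) :
    W1 μ ν ≤ ∫ y, ∫ y', ‖y - y'‖ ∂ν ∂μ ∧
    (∫ y, ∫ y', ‖y - y'‖ ∂ν ∂μ)
      ≤ W1 μ ν + Real.sqrt (∫ y, ‖y - ∫ z, z ∂μ‖ ^ 2 ∂μ)
        + Real.sqrt (∫ y', ‖y' - ∫ z, z ∂ν‖ ^ 2 ∂ν) := by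
  have hμ2 : MemLp (fun y => y) 2 μ :=
    (memLp_two_iff_integrable_sq_norm aestronglyMeasurable_id).2 hμ
  have hν2 : MemLp (fun y => y) 2 ν :=
    (memLp_two_iff_integrable_sq_norm aestronglyMeasurable_id).2 hν
  have hμ1 := hμ2.integrable one_le_two
  have hν1 := hν2.integrable one_le_two
  refine ⟨W1_le_integral_integral_norm_sub hμ1 hν1, ?_⟩
  calc ∫ y, ∫ y', ‖y - y'‖ ∂ν ∂μ
      = ∫ p, ‖p.1 - p.2‖ ∂(μ.prod ν) := (integral_norm_sub_prod hμ1 hν1).symm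
    _ ≤ ∫ y, ‖y - ∫ z, z ∂μ‖ ∂μ + ‖∫ z, z ∂μ - ∫ z, z ∂ν‖ + ∫ y', ‖y' - ∫ z, z ∂ν‖ ∂ν :=
        (isCoupling_prod μ ν).integral_norm_sub_le hμ1 hν1 _ _
    _ ≤ _ := by
        have hsdμ := integral_le_sqrt_integral_sq (hμ2.sub (memLp_const (∫ z, z ∂μ))).norm
        have hsdν := integral_le_sqrt_integral_sq (hν2.sub (memLp_const (∫ z, z ∂ν))).norm
        have hmean := norm_integral_sub_integral_le_W1 hμ1 hν1
        simp only [Pi.sub_apply] at hsdμ hsdν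
        linarith

end
end
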